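/- arXiv:1310.3761 — 2 statements merged into one kernel-verified Lean document; each statement's English description precedes it below -/
import Mathlib

section
/- The sequence of probability distributions π^M with π^M(i) = K^M (β/α)^i / ((M+i) i!) converges in total variation, as M → ∞, to the Poisson distribution with parameter β/α. -/
/-!
Write `r = β/α`, `p i = r^i/i!` and `S M = ∑ⱼ r^j/((M+j) j!) = 1/K^M`. Since
`1/(M+i) = (M/(M+i)) / M`, we get `π^M(i) = (M S M)⁻¹ (M/(M+i)) p i`. The factor `M/(M+i)` lies
in `[0,1]` and tends to `1`, so by dominated convergence `M S M → ∑ p = exp r`, and the same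
domination, now by a multiple of `|p|`, gives `∑ᵢ |π^M(i) - e^{-r} p i| → 0`.
-/

open Filter Topology

theorem abs_natCast_div_add_le_one (M j : ℕ) : |(M : ℝ) / (M + j)| ≤ 1 := by
  rw [abs_of_nonneg (by positivity)]
  exact div_le_one_of_le₀ (le_add_of_nonneg_right j.cast_nonneg) (by positivity)

theorem tendsto_tsum_natCast_div_add_mul {f : ℕ → ℝ} (hf : Summable f) :
    Tendsto (fun M : ℕ => ∑' j, (M : ℝ) / (M + j) * f j) atTop (𝓝 (∑' j, f j)) := by
  refine tendsto_tsum_of_dominated_convergence hf.abs (fun j => ?_) (.of_forall fun M j => ?_)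
  · simpa using (tendsto_natCast_div_add_atTop (j : ℝ)).mul_const (f j)
  · rw [Real.norm_eq_abs, abs_mul]
    exact mul_le_of_le_one_left (abs_nonneg _) (abs_natCast_div_add_le_one M j)

theorem tendsto_tsum_abs_mul_natCast_div_add_sub {c : ℕ → ℝ} {c₀ : ℝ}
    (hc : Tendsto c atTop (𝓝 c₀)) {p : ℕ → ℝ} (hp : Summable p) :
    Tendsto (fun M : ℕ => ∑' i, |c M * ((M : ℝ) / (M + i)) * p i - c₀ * p i|) atTop (𝓝 0) := by
  have hc_bdd : ∀ᶠ M in atTop, |c M| ≤ |c₀| + 1 :=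
    (hc.abs.eventually (gt_mem_nhds (lt_add_one |c₀|))).mono fun _ => le_of_lt
  rw [← tsum_zero]
  refine tendsto_tsum_of_dominated_convergence (hp.abs.mul_left (2 * |c₀| + 1))
    (fun i => ?_) (hc_bdd.mono fun M hM i => ?_)
  · have hlim := (hc.mul (tendsto_natCast_div_add_atTop (i : ℝ))).mul_const (p i)
    simpa using (hlim.sub_const (c₀ * p i)).abs
  · have hw := abs_natCast_div_add_le_one M i
    calc ‖|c M * ((M : ℝ) / (M + i)) * p i - c₀ * p i|‖
        ≤ |c M| * |(M : ℝ) / (M + i)| * |p i| + |c₀| * |p i| := by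
          rw [Real.norm_eq_abs, abs_abs, ← abs_mul, ← abs_mul, ← abs_mul]
          exact abs_sub _ _
      _ ≤ (|c₀| + 1) * 1 * |p i| + |c₀| * |p i| := by gcongr
      _ = (2 * |c₀| + 1) * |p i| := by ring

/-- The reciprocal `1 / K^M` of the normalizing constant. -/
noncomputable def invNormConst (r : ℝ) (M : ℕ) : ℝ :=
  ∑' j : ℕ, r ^ j / (((M : ℝ) + j) * j.factorial)

theorem natCast_mul_invNormConst (r : ℝ) (M : ℕ) :
    M * invNormConst r M = ∑' j : ℕ, (M : ℝ) / (M + j) * (r ^ j / j.factorial) := by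
  rw [invNormConst, ← tsum_mul_left]
  congr 1 with j
  rw [div_mul_div_comm, mul_div_assoc]

theorem tendsto_natCast_mul_invNormConst (r : ℝ) :
    Tendsto (fun M : ℕ => M * invNormConst r M) atTop (𝓝 (Real.exp r)) := by
  simp only [natCast_mul_invNormConst, Real.exp_eq_exp_ℝ, NormedSpace.exp_eq_tsum_div]
  exact tendsto_tsum_natCast_div_add_mul (Real.summable_pow_div_factorial r)

theorem invNormConst_inv_mul_div {M : ℕ} (hM : M ≠ 0) (r : ℝ) (i : ℕ) :
    (invNormConst r M)⁻¹ * r ^ i / (((M : ℝ) + i) * i.factorial) =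
      (M * invNormConst r M)⁻¹ * ((M : ℝ) / (M + i)) * (r ^ i / i.factorial) := by
  rw [mul_inv_rev, div_eq_mul_inv (M : ℝ), mul_assoc _ (M : ℝ)⁻¹,
    inv_mul_cancel_left₀ (Nat.cast_ne_zero.mpr hM)]
  simp only [div_eq_mul_inv, mul_inv]
  ring

theorem stmt_6_general (α β : ℝ)
    (π : ℕ → ℕ → ℝ)
    (hπ : ∀ M i : ℕ, π M i =
      (∑' j : ℕ, (β / α) ^ j / (((M : ℝ) + j) * (Nat.factorial j)))⁻¹ *
        (β / α) ^ i / (((M : ℝ) + i) * (Nat.factorial i))) :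
    Filter.Tendsto
      (fun M : ℕ =>
        ∑' i : ℕ, |π M i - Real.exp (-(β / α)) * (β / α) ^ i / (Nat.factorial i)|)
      Filter.atTop (nhds 0) := by
  set r := β / α
  have hc : Tendsto (fun M : ℕ => (M * invNormConst r M)⁻¹) atTop (𝓝 (Real.exp (-r))) := by
    simpa [Real.exp_neg] using (tendsto_natCast_mul_invNormConst r).inv₀ (Real.exp_ne_zero r)
  refine (tendsto_tsum_abs_mul_natCast_div_add_sub hc (Real.summable_pow_div_factorial r)).congr'
    ((eventually_ne_atTop 0).mono fun M hM => tsum_congr fun i => ?_)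
  rw [hπ M i, ← invNormConst, invNormConst_inv_mul_div hM, mul_div_assoc (Real.exp _)]

/-- The distributions π^M(i) = K^M (β/α)^i / ((M+i) i!) converge in total variation,
as M → ∞, to the Poisson(β/α) distribution. -/
theorem stmt_6 (α β : ℝ) (hα : 0 < α) (hβ : 0 < β)
    (π : ℕ → ℕ → ℝ)
    (hπ : ∀ M i : ℕ, π M i =
      (∑' j : ℕ, (β / α) ^ j / (((M : ℝ) + j) * (Nat.factorial j)))⁻¹ *
        (β / α) ^ i / (((M : ℝ) + i) * (Nat.factorial i))) :
    Filter.Tendsto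
      (fun M : ℕ =>
        ∑' i : ℕ, |π M i - Real.exp (-(β / α)) * (β / α) ^ i / (Nat.factorial i)|)
      Filter.atTop (nhds 0) :=
  stmt_6_general α β π hπ
end

section
/- Let A be the generator (Q-matrix) of a finite-state continuous-time Markov chain with transient class T and absorbing set, and let A_Q be the restriction of A to T × T. If every state of T can reach the absorbing set and T is irreducible, then there exists a unique probability vector π̃ on T with strictly positive entries and a real number θ < 0 such that π̃ A_Q = θ π̃. -/
/-!
Shift the Metzler matrix `A` to `B = A + c • 1`, which is nonnegative with positive diagonal;
irreducibility then makes some power of `B` entrywise positive. The Collatz–Wielandt argument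
(maximise `r` over the compact set of pairs `(r, x)` with `x` in the simplex and `r • x ≤ x ᵥ* B`)
yields a nonnegative left eigenvector of `B`, hence of `A`. For a Metzler matrix, a nonnegative left
eigenvector vanishing at `j` also vanishes at every `i` with `A i j > 0`, so irreducibility forces
it to be strictly positive. Comparing two positive left eigenvectors through the largest `s` with
`s • π ≤ π'` shows that their eigenvalues agree and then that they are proportional. Finally,
`θ = ∑ᵢ πᵢ (∑ⱼ Aᵢⱼ) < 0`.
-/

open Matrix Finset

section

variable {n : Type*}

theorem mul_apply_nonneg_of_apply_eq_zero {A : Matrix n n ℝ} (hA : ∀ i j, i ≠ j → 0 ≤ A i j)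
    {w : n → ℝ} (hw : 0 ≤ w) {j : n} (hj : w j = 0) (i : n) : 0 ≤ w i * A i j := by
  obtain rfl | hij := eq_or_ne i j
  · simp [hj]
  · exact mul_nonneg (hw i) (hA i j hij)

variable [Fintype n]

theorem exists_smul_le_of_pos [Nonempty n] {π : n → ℝ} (hπ : ∀ i, 0 < π i) (π' : n → ℝ) :
    ∃ s : ℝ, s • π ≤ π' ∧ ∃ i, π' i = s * π i := by
  obtain ⟨i, -, hi⟩ := exists_min_image univ (fun i => π' i / π i) univ_nonempty
  exact ⟨π' i / π i, fun j => (le_div_iff₀ (hπ j)).mp (hi j (mem_univ j)), i,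
    (div_mul_cancel₀ _ (hπ i).ne').symm⟩

theorem sum_vecMul_apply (x : n → ℝ) (B : Matrix n n ℝ) :
    ∑ j, (x ᵥ* B) j = ∑ i, x i * ∑ j, B i j := by
  simp only [vecMul, dotProduct, mul_sum]
  exact sum_comm

theorem ne_zero_of_mem_stdSimplex {x : n → ℝ} (hx : x ∈ stdSimplex ℝ n) : x ≠ 0 := by
  rintro rfl
  simpa using hx.2

section Metzler

variable {A : Matrix n n ℝ}

theorem vecMul_apply_nonneg_of_apply_eq_zero (hA : ∀ i j, i ≠ j → 0 ≤ A i j) {w : n → ℝ}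
    (hw : 0 ≤ w) {j : n} (hj : w j = 0) : 0 ≤ (w ᵥ* A) j :=
  sum_nonneg fun i _ => mul_apply_nonneg_of_apply_eq_zero hA hw hj i

theorem apply_eq_zero_of_vecMul_apply_eq_zero (hA : ∀ i j, i ≠ j → 0 ≤ A i j) {w : n → ℝ}
    (hw : 0 ≤ w) {j : n} (hj : w j = 0) (hwA : (w ᵥ* A) j = 0) {i : n} (hAij : 0 < A i j) :
    w i = 0 := by
  have := (sum_eq_zero_iff_of_nonneg fun i _ => mul_apply_nonneg_of_apply_eq_zero hA hw hj i).mp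
    hwA i (mem_univ i)
  exact (mul_eq_zero.mp this).resolve_right hAij.ne'

theorem eq_zero_of_vecMul_eq_smul_of_apply_eq_zero (hA : ∀ i j, i ≠ j → 0 ≤ A i j)
    (hirr : ∀ i j, Relation.ReflTransGen (fun a b => a ≠ b ∧ 0 < A a b) i j)
    {w : n → ℝ} {θ : ℝ} (hw : 0 ≤ w) (h : w ᵥ* A = θ • w) {j : n} (hj : w j = 0) : w = 0 := by
  funext i
  induction hirr i j using Relation.ReflTransGen.head_induction_on with
  | refl => exact hj
  | head hab _ hb => exact apply_eq_zero_of_vecMul_apply_eq_zero hA hw hb (by simp [h, hb]) hab.2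

theorem pos_of_vecMul_eq_smul (hA : ∀ i j, i ≠ j → 0 ≤ A i j)
    (hirr : ∀ i j, Relation.ReflTransGen (fun a b => a ≠ b ∧ 0 < A a b) i j)
    {w : n → ℝ} {θ : ℝ} (hw : 0 ≤ w) (hw0 : w ≠ 0) (h : w ᵥ* A = θ • w) (i : n) : 0 < w i :=
  (hw i).lt_of_ne fun hi => hw0 (eq_zero_of_vecMul_eq_smul_of_apply_eq_zero hA hirr hw h hi.symm)

theorem le_of_vecMul_eq_smul_of_pos [Nonempty n] (hA : ∀ i j, i ≠ j → 0 ≤ A i j)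
    {π π' : n → ℝ} {θ θ' : ℝ} (hπ : ∀ i, 0 < π i) (hπ' : ∀ i, 0 < π' i)
    (h : π ᵥ* A = θ • π) (h' : π' ᵥ* A = θ' • π') : θ ≤ θ' := by
  obtain ⟨s, hs, i, hi⟩ := exists_smul_le_of_pos hπ π'
  have hw := vecMul_apply_nonneg_of_apply_eq_zero hA (sub_nonneg.mpr hs) (j := i)
    (by simp [hi])
  have hwA : ((π' - s • π) ᵥ* A) i = (θ' - θ) * π' i := by
    simp only [sub_vecMul, smul_vecMul, h, h', Pi.sub_apply, Pi.smul_apply, smul_eq_mul, hi]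
    ring
  rw [hwA] at hw
  exact sub_nonneg.mp (nonneg_of_mul_nonneg_left hw (hπ' i))

theorem eq_of_vecMul_eq_smul_of_pos [Nonempty n] (hA : ∀ i j, i ≠ j → 0 ≤ A i j)
    (hirr : ∀ i j, Relation.ReflTransGen (fun a b => a ≠ b ∧ 0 < A a b) i j)
    {π π' : n → ℝ} {θ θ' : ℝ} (hπ : ∀ i, 0 < π i) (hπ' : ∀ i, 0 < π' i)
    (hsum : ∑ i, π i = 1) (hsum' : ∑ i, π' i = 1)
    (h : π ᵥ* A = θ • π) (h' : π' ᵥ* A = θ' • π') : π' = π ∧ θ' = θ := by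
  obtain rfl : θ' = θ :=
    le_antisymm (le_of_vecMul_eq_smul_of_pos hA hπ' hπ h' h)
      (le_of_vecMul_eq_smul_of_pos hA hπ hπ' h h')
  obtain ⟨s, hs, i, hi⟩ := exists_smul_le_of_pos hπ π'
  have hπ's : π' = s • π := sub_eq_zero.mp <|
    eq_zero_of_vecMul_eq_smul_of_apply_eq_zero hA hirr (sub_nonneg.mpr hs)
      (by rw [sub_vecMul, smul_vecMul, h, h', smul_sub, smul_comm]) (j := i) (by simp [hi])
  have hs1 : s = 1 := by simpa [hπ's, ← mul_sum, hsum] using hsum'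
  simp [hπ's, hs1]

theorem neg_of_vecMul_eq_smul (hrow : ∀ i, ∑ j, A i j ≤ 0) (hsome : ∃ i, ∑ j, A i j < 0)
    {π : n → ℝ} {θ : ℝ} (hπ : ∀ i, 0 < π i) (hsum : ∑ i, π i = 1) (h : π ᵥ* A = θ • π) :
    θ < 0 := by
  obtain ⟨i₀, hi₀⟩ := hsome
  calc θ = ∑ j, (π ᵥ* A) j := by simp [h, ← mul_sum, hsum]
    _ = ∑ i, π i * ∑ j, A i j := sum_vecMul_apply π A
    _ < ∑ _i : n, (0 : ℝ) :=
      sum_lt_sum (fun i _ => mul_nonpos_of_nonneg_of_nonpos (hπ i).le (hrow i))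
        ⟨i₀, mem_univ i₀, mul_neg_of_pos_of_neg (hπ i₀) hi₀⟩
    _ = 0 := sum_const_zero

end Metzler

section Nonneg

variable {B : Matrix n n ℝ}

theorem pow_succ_apply_pos [DecidableEq n] (hB : ∀ i j, 0 ≤ B i j) {k : ℕ} {i l j : n}
    (hk : 0 < (B ^ k) i l) (hlj : 0 < B l j) : 0 < (B ^ (k + 1)) i j := by
  rw [pow_succ, mul_apply]
  exact sum_pos' (fun m _ => mul_nonneg (pow_apply_nonneg hB k i m) (hB m j))
    ⟨l, mem_univ l, mul_pos hk hlj⟩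

theorem exists_pow_apply_pos_of_reflTransGen [DecidableEq n] (hB : ∀ i j, 0 ≤ B i j)
    {r : n → n → Prop} (hr : ∀ a b, r a b → 0 < B a b) {i j : n}
    (h : Relation.ReflTransGen r i j) : ∃ k, 0 < (B ^ k) i j := by
  induction h with
  | refl => exact ⟨0, by simp⟩
  | tail _ hbc ih =>
    obtain ⟨k, hk⟩ := ih
    exact ⟨k + 1, pow_succ_apply_pos hB hk (hr _ _ hbc)⟩

theorem pow_apply_pos_of_le [DecidableEq n] (hB : ∀ i j, 0 ≤ B i j) (hdiag : ∀ i, 0 < B i i)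
    {i j : n} {k l : ℕ} (hk : 0 < (B ^ k) i j) (hkl : k ≤ l) : 0 < (B ^ l) i j := by
  induction l, hkl using Nat.le_induction with
  | base => exact hk
  | succ l _ ih => exact pow_succ_apply_pos hB ih (hdiag j)

theorem isPrimitive_of_reflTransGen [DecidableEq n] (hB : ∀ i j, 0 ≤ B i j)
    (hdiag : ∀ i, 0 < B i i) {r : n → n → Prop} (hr : ∀ a b, r a b → 0 < B a b)
    (hconn : ∀ i j, Relation.ReflTransGen r i j) : B.IsPrimitive := by
  choose k hk using fun i j => exists_pow_apply_pos_of_reflTransGen hB hr (hconn i j)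
  refine ⟨hB, univ.sup (fun p : n × n => k p.1 p.2) + 1, Nat.succ_pos _,
    fun i j => pow_apply_pos_of_le hB hdiag (hk i j) ?_⟩
  exact (le_sup (f := fun p : n × n => k p.1 p.2) (mem_univ (i, j))).trans (Nat.le_succ _)

theorem vecMul_apply_pos {M : Matrix n n ℝ} (hM : ∀ i j, 0 < M i j) {x : n → ℝ} (hx : 0 ≤ x)
    (hx0 : x ≠ 0) (j : n) : 0 < (x ᵥ* M) j := by
  obtain ⟨i, hi⟩ := Function.ne_iff.mp hx0
  exact sum_pos' (fun k _ => mul_nonneg (hx k) (hM k j).le)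
    ⟨i, mem_univ i, mul_pos ((hx i).lt_of_ne' hi) (hM i j)⟩

theorem le_sum_sum_of_smul_le_vecMul (hB : ∀ i j, 0 ≤ B i j) {r : ℝ} {x : n → ℝ}
    (hx : x ∈ stdSimplex ℝ n) (h : r • x ≤ x ᵥ* B) : r ≤ ∑ i, ∑ j, B i j :=
  calc r = ∑ j, r * x j := by rw [← mul_sum, hx.2, mul_one]
    _ ≤ ∑ j, (x ᵥ* B) j := sum_le_sum fun j _ => h j
    _ = ∑ i, x i * ∑ j, B i j := sum_vecMul_apply x B
    _ ≤ ∑ i, ∑ j, B i j := sum_le_sum fun i _ =>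
      mul_le_of_le_one_left (sum_nonneg fun j _ => hB i j) (mem_Icc_of_mem_stdSimplex hx i).2

theorem exists_mem_stdSimplex_smul_le_vecMul [Nonempty n] {r : ℝ} {y : n → ℝ}
    (hy : ∀ i, 0 < y i) (h : r • y ≤ y ᵥ* B) : ∃ x ∈ stdSimplex ℝ n, r • x ≤ x ᵥ* B := by
  have hsum : 0 < ∑ i, y i := sum_pos (fun i _ => hy i) univ_nonempty
  refine ⟨(∑ i, y i)⁻¹ • y, ⟨fun i => ?_, ?_⟩, ?_⟩
  · exact mul_nonneg (inv_nonneg.mpr hsum.le) (hy i).le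
  · simp [← mul_sum, hsum.ne']
  · rw [smul_vecMul, smul_comm]
    exact smul_le_smul_of_nonneg_left h (inv_nonneg.mpr hsum.le)

theorem exists_smul_le_vecMul_of_ne [DecidableEq n] [Nonempty n] {k : ℕ}
    (hk : ∀ i j, 0 < (B ^ k) i j) {r : ℝ} {z : n → ℝ} (hz : z ∈ stdSimplex ℝ n)
    (h : r • z ≤ z ᵥ* B) (hne : z ᵥ* B ≠ r • z) :
    ∃ ε > 0, ∃ x ∈ stdSimplex ℝ n, (r + ε) • x ≤ x ᵥ* B := by
  set y := z ᵥ* B ^ k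
  have hy := vecMul_apply_pos hk hz.1 (ne_zero_of_mem_stdSimplex hz)
  have hd : ∀ j, 0 < ((z ᵥ* B - r • z) ᵥ* B ^ k) j :=
    vecMul_apply_pos hk (sub_nonneg.mpr h) (sub_ne_zero.mpr hne)
  -- `B` commutes with `B ^ k`, so the defect of `z` is mapped to the defect of `y`.
  have hcomm : (z ᵥ* B - r • z) ᵥ* B ^ k = y ᵥ* B - r • y := by
    rw [sub_vecMul, smul_vecMul, vecMul_vecMul, vecMul_vecMul, ← pow_succ', pow_succ]
  obtain ⟨ε, hε, i, hi⟩ := exists_smul_le_of_pos hy ((z ᵥ* B - r • z) ᵥ* B ^ k)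
  refine ⟨ε, pos_of_mul_pos_left (hi ▸ hd i) (hy i).le,
    exists_mem_stdSimplex_smul_le_vecMul hy ?_⟩
  rw [hcomm] at hε
  rw [add_smul]
  exact le_sub_iff_add_le'.mp hε

theorem Matrix.IsPrimitive.exists_mem_stdSimplex_vecMul_eq_smul [DecidableEq n] [Nonempty n]
    (hB : B.IsPrimitive) : ∃ r : ℝ, ∃ z ∈ stdSimplex ℝ n, z ᵥ* B = r • z := by
  obtain ⟨hB0, k, -, hk⟩ := hB
  set S : Set (ℝ × (n → ℝ)) :=
    Set.Icc 0 (∑ i, ∑ j, B i j) ×ˢ stdSimplex ℝ n ∩ {p | p.1 • p.2 ≤ p.2 ᵥ* B}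
  have hS : IsCompact S := (isCompact_Icc.prod (isCompact_stdSimplex ℝ n)).inter_right
    (isClosed_le (by fun_prop) (continuous_snd.matrix_vecMul continuous_const))
  have hSne : S.Nonempty := ⟨(0, Pi.single (Classical.arbitrary n) 1),
    ⟨⟨le_rfl, sum_nonneg fun i _ => sum_nonneg fun j _ => hB0 i j⟩, single_mem_stdSimplex ℝ _⟩,
    fun j => by simpa using hB0 _ j⟩
  obtain ⟨⟨r, z⟩, ⟨⟨hr, hz⟩, hrz⟩, hmax⟩ := hS.exists_isMaxOn hSne continuous_fst.continuousOn
  refine ⟨r, z, hz, by_contra fun hne => ?_⟩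
  obtain ⟨ε, hε, x, hx, hxB⟩ := exists_smul_le_vecMul_of_ne hk hz hrz hne
  have : r + ε ≤ r := hmax (show (r + ε, x) ∈ S from
    ⟨⟨⟨by linarith [hr.1], le_sum_sum_of_smul_le_vecMul hB0 hx hxB⟩, hx⟩, hxB⟩)
  linarith

end Nonneg

theorem isPrimitive_add_smul_one [DecidableEq n] {A : Matrix n n ℝ}
    (hA : ∀ i j, i ≠ j → 0 ≤ A i j)
    (hirr : ∀ i j, Relation.ReflTransGen (fun a b => a ≠ b ∧ 0 < A a b) i j)
    {c : ℝ} (hc : ∀ i, 0 < A i i + c) : (A + c • 1).IsPrimitive := by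
  have hoff : ∀ i j, i ≠ j → (A + c • 1) i j = A i j := fun i j h => by simp [one_apply_ne h]
  refine isPrimitive_of_reflTransGen (fun i j => ?_) (fun i => by simpa using hc i)
    (r := fun a b => a ≠ b ∧ 0 < A a b) (fun a b hab => (hoff a b hab.1).symm ▸ hab.2) hirr
  obtain rfl | h := eq_or_ne i j
  · simpa using (hc i).le
  · exact (hoff i j h).symm ▸ hA i j h

end

/-- Perron–Frobenius for the restriction A_Q of the generator of a finite CTMC to an
irreducible transient class from which the absorbing set is reachable: there is a
unique strictly positive probability (left) eigenvector π̃ with π̃ A_Q = θ π̃, θ < 0. -/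
theorem stmt_13 {T : Type*} [Fintype T] [DecidableEq T] [Nonempty T]
    (A : Matrix T T ℝ)
    (hoff : ∀ i j, i ≠ j → 0 ≤ A i j)
    (hrow : ∀ i, ∑ j, A i j ≤ 0)
    (hsome : ∃ i, ∑ j, A i j < 0)
    (hirr : ∀ i j, Relation.ReflTransGen (fun a b => a ≠ b ∧ 0 < A a b) i j) :
    ∃ (π : T → ℝ) (θ : ℝ), (∀ i, 0 < π i) ∧ (∑ i, π i) = 1 ∧ θ < 0 ∧
      Matrix.vecMul π A = θ • π ∧
      ∀ (π' : T → ℝ) (θ' : ℝ), (∀ i, 0 < π' i) → (∑ i, π' i) = 1 →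
        Matrix.vecMul π' A = θ' • π' → π' = π ∧ θ' = θ := by
  obtain ⟨b, hb⟩ := (Set.finite_range fun i => -A i i).bddAbove
  have hc : ∀ i, 0 < A i i + (b + 1) := fun i => by linarith [hb ⟨i, rfl⟩]
  obtain ⟨r, z, hz, hzB⟩ :=
    (isPrimitive_add_smul_one hoff hirr hc).exists_mem_stdSimplex_vecMul_eq_smul
  have hzA : z ᵥ* A = (r - (b + 1)) • z := by
    rw [vecMul_add, vecMul_smul, vecMul_one] at hzB
    rw [sub_smul, ← hzB, add_sub_cancel_right]
  have hzpos := pos_of_vecMul_eq_smul hoff hirr hz.1 (ne_zero_of_mem_stdSimplex hz) hzA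
  exact ⟨z, _, hzpos, hz.2, neg_of_vecMul_eq_smul hrow hsome hzpos hz.2 hzA, hzA,
    fun π' θ' hπ' hsum' h' => eq_of_vecMul_eq_smul_of_pos hoff hirr hzpos hπ' hz.2 hsum' hzA h'⟩
end
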